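/- arXiv:2511.22206 — 4 statements merged into one kernel-verified Lean document; each statement's English description precedes it below -/
import Mathlib

section
/- Let K and M be real Hilbert spaces, W ⊆ K and Z ⊆ M finite-dimensional subspaces, and C : W → Z a linear map. Let B : Z → W be a linear map satisfying ⟨B z, w⟩_K = ⟨z, C w⟩_M for all z ∈ Z and w ∈ W. If z ∈ M and g ∈ K satisfy the weak relation ⟨z, C w⟩_M = ⟨g, w⟩_K for all w ∈ W, then B(P_Z z) = P_W g, where P_W : K → W and P_Z : M → Z denote the orthogonal projections. -/
open scoped RealInnerProductSpace

/-- Let `K` and `M` be real Hilbert spaces, `W ⊆ K` and `Z ⊆ M`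
finite-dimensional subspaces, and `C : W → Z` a linear map. Let `B : Z → W` satisfy
`⟨B z, w⟩_K = ⟨z, C w⟩_M` for all `z ∈ Z`, `w ∈ W`. If `z ∈ M` and `g ∈ K` satisfy
`⟨z, C w⟩_M = ⟨g, w⟩_K` for all `w ∈ W`, then `B (P_Z z) = P_W g`, where `P_W, P_Z`
are the orthogonal projections. -/
theorem stmt1
    {K M : Type*} [NormedAddCommGroup K] [InnerProductSpace ℝ K]
    [NormedAddCommGroup M] [InnerProductSpace ℝ M]
    (W : Submodule ℝ K) (Z : Submodule ℝ M)
    [FiniteDimensional ℝ W] [FiniteDimensional ℝ Z]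
    (C : W →ₗ[ℝ] Z) (B : Z →ₗ[ℝ] W)
    (hB : ∀ (z : Z) (w : W), ⟪(B z : K), (w : K)⟫ = ⟪(z : M), (C w : M)⟫)
    (z : M) (g : K)
    (hweak : ∀ w : W, ⟪z, (C w : M)⟫ = ⟪g, (w : K)⟫) :
    B (Z.orthogonalProjectionOnto z) = W.orthogonalProjectionOnto g := by
  refine ext_inner_right ℝ fun w => ?_
  calc ⟪B (Z.orthogonalProjectionOnto z), w⟫
      = ⟪(Z.orthogonalProjectionOnto z : M), (C w : M)⟫ := hB _ w
    _ = ⟪z, (C w : M)⟫ := Z.inner_orthogonalProjectionOnto_eq_of_mem_right (C w) z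
    _ = ⟪g, (w : K)⟫ := hweak w
    _ = ⟪W.orthogonalProjectionOnto g, w⟫ :=
      (W.inner_orthogonalProjectionOnto_eq_of_mem_right w g).symm
end

section
/- Let H and K be real Hilbert spaces, V_pw ⊆ H and W_pw ⊆ K finite-dimensional subspaces, and V_h ⊆ V_pw, W_h ⊆ W_pw subspaces. Let P⁰ : V_pw → V_pw and P¹ : W_pw → W_pw be linear maps with range(P⁰) ⊆ V_h, P⁰ v = v for all v ∈ V_h, range(P¹) ⊆ W_h, and P¹ w = w for all w ∈ W_h. Let G : V_h → W_h be linear, and let D : W_pw → V_pw be the linear map determined by ⟨D w, φ⟩_H = −⟨w, G P⁰ φ⟩_K for all φ ∈ V_pw, w ∈ W_pw. Denote by Q⁰ : H → V_pw and Q¹ : K → W_pw the orthogonal projections, and by (P⁰)*, (P¹)* the adjoints of P⁰, P¹ as operators on the finite-dimensional inner-product spaces V_pw, W_pw. If u ∈ K and f ∈ H satisfy ⟨u, G ψ⟩_K = −⟨f, ψ⟩_H for all ψ ∈ V_h, then D((P¹)* Q¹ u) = (P⁰)* Q⁰ f. -/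
open scoped RealInnerProductSpace

/-!
Test against `φ ∈ V_pw` and move every operator across the inner product: `D` turns into
`-G P⁰`, the adjoints `(Pℓ)*` into `Pℓ`, and the orthogonal projections disappear because
the other argument already lies in the subspace. `P¹` fixes `G P⁰ φ ∈ W_h`, so the weak
relation for `ψ = P⁰ φ ∈ V_h` closes the chain.
-/

theorem Submodule.inner_adjoint_orthogonalProjectionOnto {E : Type*} [NormedAddCommGroup E]
    [InnerProductSpace ℝ E] (U : Submodule ℝ E) [FiniteDimensional ℝ U] (P : U →ₗ[ℝ] U)
    (x : E) (v : U) :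
    ⟪((LinearMap.adjoint P (U.orthogonalProjectionOnto x) : U) : E), (v : E)⟫ =
      ⟪x, (P v : E)⟫ := by
  rw [← Submodule.coe_inner, LinearMap.adjoint_inner_left,
    Submodule.inner_orthogonalProjectionOnto_eq_of_mem_right]

theorem stmt2_general
    {H K : Type*} [NormedAddCommGroup H] [InnerProductSpace ℝ H]
    [NormedAddCommGroup K] [InnerProductSpace ℝ K]
    (Vpw : Submodule ℝ H) (Wpw : Submodule ℝ K)
    [FiniteDimensional ℝ Vpw] [FiniteDimensional ℝ Wpw]
    (Vh : Submodule ℝ Vpw) (Wh : Submodule ℝ Wpw)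
    (P0 : Vpw →ₗ[ℝ] Vpw) (P1 : Wpw →ₗ[ℝ] Wpw)
    (hP0range : ∀ v, P0 v ∈ Vh)
    (hP1fix : ∀ w ∈ Wh, P1 w = w)
    (G : Vh →ₗ[ℝ] Wh) (D : Wpw →ₗ[ℝ] Vpw)
    (hD : ∀ (w : Wpw) (φ : Vpw),
      ⟪((D w : Vpw) : H), ((φ : Vpw) : H)⟫ =
        - ⟪(w : K), ((G ⟨P0 φ, hP0range φ⟩ : Wpw) : K)⟫)
    (u : K) (f : H)
    (hweak : ∀ ψ : Vh, ⟪u, ((G ψ : Wpw) : K)⟫ = - ⟪f, ((ψ : Vpw) : H)⟫) :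
    D ((LinearMap.adjoint P1) (Submodule.orthogonalProjection Wpw u)) =
      (LinearMap.adjoint P0) (Submodule.orthogonalProjection Vpw f) := by
  refine ext_inner_right ℝ fun φ => ?_
  set ψ : Vh := ⟨P0 φ, hP0range φ⟩
  calc ⟪((D (LinearMap.adjoint P1 (Wpw.orthogonalProjectionOnto u)) : Vpw) : H), (φ : H)⟫
      = -⟪((LinearMap.adjoint P1 (Wpw.orthogonalProjectionOnto u) : Wpw) : K),
          ((G ψ : Wpw) : K)⟫ := hD _ φ
    _ = -⟪u, ((P1 (G ψ : Wpw) : Wpw) : K)⟫ := by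
        rw [Submodule.inner_adjoint_orthogonalProjectionOnto]
    _ = ⟪f, ((ψ : Vpw) : H)⟫ := by rw [hP1fix _ (G ψ).2, hweak, neg_neg]
    _ = ⟪((LinearMap.adjoint P0 (Vpw.orthogonalProjectionOnto f) : Vpw) : H), (φ : H)⟫ :=
        (Submodule.inner_adjoint_orthogonalProjectionOnto Vpw P0 f φ).symm

/-- Broken-FEEC weak divergence commuting relation (the divergence half of
Theorem 2.2 of the paper): with broken spaces `Vpw ⊆ H`, `Wpw ⊆ K`, conforming subspaces
`Vh ⊆ Vpw`, `Wh ⊆ Wpw`, conforming projections `P⁰`, `P¹`, a differential operator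
`G : Vh → Wh`, and `D : Wpw → Vpw` determined by `⟨D w, φ⟩_H = −⟨w, G P⁰ φ⟩_K`,
if `⟨u, G ψ⟩_K = −⟨f, ψ⟩_H` for all `ψ ∈ Vh`, then `D ((P¹)* Q¹ u) = (P⁰)* Q⁰ f`. -/
theorem stmt2
    {H K : Type*} [NormedAddCommGroup H] [InnerProductSpace ℝ H]
    [NormedAddCommGroup K] [InnerProductSpace ℝ K]
    (Vpw : Submodule ℝ H) (Wpw : Submodule ℝ K)
    [FiniteDimensional ℝ Vpw] [FiniteDimensional ℝ Wpw]
    (Vh : Submodule ℝ Vpw) (Wh : Submodule ℝ Wpw)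
    (P0 : Vpw →ₗ[ℝ] Vpw) (P1 : Wpw →ₗ[ℝ] Wpw)
    (hP0range : ∀ v, P0 v ∈ Vh) (hP0fix : ∀ v ∈ Vh, P0 v = v)
    (hP1range : ∀ w, P1 w ∈ Wh) (hP1fix : ∀ w ∈ Wh, P1 w = w)
    (G : Vh →ₗ[ℝ] Wh) (D : Wpw →ₗ[ℝ] Vpw)
    (hD : ∀ (w : Wpw) (φ : Vpw),
      ⟪((D w : Vpw) : H), ((φ : Vpw) : H)⟫ =
        - ⟪(w : K), ((G ⟨P0 φ, hP0range φ⟩ : Wpw) : K)⟫)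
    (u : K) (f : H)
    (hweak : ∀ ψ : Vh, ⟪u, ((G ψ : Wpw) : K)⟫ = - ⟪f, ((ψ : Vpw) : H)⟫) :
    D ((LinearMap.adjoint P1) (Submodule.orthogonalProjection Wpw u)) =
      (LinearMap.adjoint P0) (Submodule.orthogonalProjection Vpw f) :=
  stmt2_general Vpw Wpw Vh Wh P0 P1 hP0range hP1fix G D hD u f hweak
end

section
/- In the two-patch edge setting, there exists a linear operator P⁰ : V_pw → V_pw such that: (1) P⁰φ is edge-continuous for every φ ∈ V_pw; (2) P⁰φ = φ if and only if φ is edge-continuous (hence P⁰ is idempotent and its range is exactly the conforming subspace V_h of edge-continuous pairs); and (3) P⁰ preserves patchwise polynomial moments of order r, i.e. for each σ ∈ {−,+} and all q₁, q₂ ∈ Q one has ∫_{[0,1]²} (P⁰φ)^σ(x,s) q₁(x) q₂(s) dx ds = ∫_{[0,1]²} φ^σ(x,s) q₁(x) q₂(s) dx ds for every φ ∈ V_pw. -/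
noncomputable section

/-- The `L²(0,1)` pairing `⟨f, g⟩ = ∫₀¹ f g`. -/
def l2ip (f g : ℝ → ℝ) : ℝ := ∫ x in (0:ℝ)..1, f x * g x

/-- Real polynomial functions of degree at most `r - 1`. -/
def polyDegLT (r : ℕ) : Set (ℝ → ℝ) :=
  {f | ∃ p : Polynomial ℝ, p.degree < (r : WithBot ℕ) ∧ f = fun x => p.eval x}

/-- Tensor-product span of the functions `(x, s) ↦ λᵢ(x) λⱼ(s)`. -/
def tensorSpan {n : ℕ} (lam : Fin (n + 1) → ℝ → ℝ) : Submodule ℝ (ℝ → ℝ → ℝ) :=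
  Submodule.span ℝ {f | ∃ i j, f = fun x s => lam i x * lam j s}

/-- Edge continuity: the two patch components agree on the shared edge `s = 0`. -/
def EdgeCont (φ : (ℝ → ℝ → ℝ) × (ℝ → ℝ → ℝ)) : Prop :=
  ∀ x ∈ Set.Icc (0:ℝ) 1, φ.1 x 0 = φ.2 x 0

/-- The moment `∫_{[0,1]²} f(x,s) q₁(x) q₂(s) dx ds`. -/
def mom2 (f : ℝ → ℝ → ℝ) (q₁ q₂ : ℝ → ℝ) : ℝ :=
  ∫ x in (0:ℝ)..1, ∫ s in (0:ℝ)..1, f x s * q₁ x * q₂ s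

/-!
With `μ = μ⁺₀`, the function `g = λ⁺₀ - μ` lies in `𝕍₊`, satisfies `g 0 = 1`, and is
`L²`-orthogonal to `Q`. Replacing `φ⁺` by `φ⁺ - [φ] ⊗ g`, where `[φ] = φ⁺(·, 0) - φ⁻(·, 0) ∈ 𝕍₊`
is the jump across the edge, makes the pair edge-continuous. The map is the identity when the jump
is zero, and it preserves every moment because `∫ g q₂ = 0`. The functions here are defined on all
of `ℝ`, so `[φ]` is replaced by an element of `𝕍₊` that depends linearly on `φ`, agrees with the
jump on `[0, 1]` and vanishes whenever the jump vanishes there.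
-/

open Set Submodule

theorem Submodule.exists_le_ker_and_sub_mem {K V : Type*} [DivisionRing K] [AddCommGroup V]
    [Module K V] (W : Submodule K V) :
    ∃ p : V →ₗ[K] V, W ≤ LinearMap.ker p ∧ ∀ v, p v - v ∈ W := by
  obtain ⟨s, hs⟩ := W.mkQ.exists_rightInverse_of_surjective W.range_mkQ
  refine ⟨s ∘ₗ W.mkQ, fun v hv => by simp [(Quotient.mk_eq_zero W).mpr hv], fun v => ?_⟩
  rw [← Quotient.eq]
  exact LinearMap.congr_fun hs (W.mkQ v)

theorem continuousOn_of_mem_span {ι X : Type*} [TopologicalSpace X] {lam : ι → X → ℝ}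
    {s : Set X} (hc : ∀ i, ContinuousOn (lam i) s) {v : X → ℝ}
    (hv : v ∈ span ℝ (range lam)) : ContinuousOn v s := by
  induction hv using span_induction with
  | mem v hv => obtain ⟨i, rfl⟩ := hv; exact hc i
  | zero => exact continuousOn_const
  | add v w _ _ hv hw => exact hv.add hw
  | smul a v _ hv => exact hv.const_smul a

theorem continuous_of_mem_polyDegLT {r : ℕ} {q : ℝ → ℝ} (hq : q ∈ polyDegLT r) :
    Continuous q := by
  obtain ⟨p, -, rfl⟩ := hq
  exact p.continuous

theorem l2ip_sub_left {f g q : ℝ → ℝ} (hf : ContinuousOn f (Icc 0 1))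
    (hg : ContinuousOn g (Icc 0 1)) (hq : ContinuousOn q (Icc 0 1)) :
    l2ip (f - g) q = l2ip f q - l2ip g q := by
  simp only [l2ip, Pi.sub_apply, sub_mul]
  exact intervalIntegral.integral_sub ((hf.mul hq).intervalIntegrable_of_Icc zero_le_one)
    ((hg.mul hq).intervalIntegrable_of_Icc zero_le_one)

theorem exists_mem_span_eq_one_and_l2ip_eq_zero {ι : Type*} {lam : ι → ℝ → ℝ}
    (hc : ∀ i, ContinuousOn (lam i) (Icc 0 1)) {r : ℕ} {v μ : ℝ → ℝ}
    (hv : v ∈ span ℝ (range lam)) (hμ : μ ∈ span ℝ (range lam)) (hv0 : v 0 = 1)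
    (hμ0 : μ 0 = 0) (hmom : ∀ q ∈ polyDegLT r, l2ip μ q = l2ip v q) :
    ∃ g ∈ span ℝ (range lam), g 0 = 1 ∧ ∀ q ∈ polyDegLT r, l2ip g q = 0 := by
  refine ⟨v - μ, sub_mem hv hμ, by simp [hv0, hμ0], fun q hq => ?_⟩
  rw [l2ip_sub_left (continuousOn_of_mem_span hc hv) (continuousOn_of_mem_span hc hμ)
    (continuous_of_mem_polyDegLT hq).continuousOn, hmom q hq, sub_self]

def outerMul : (ℝ → ℝ) →ₗ[ℝ] (ℝ → ℝ) →ₗ[ℝ] (ℝ → ℝ → ℝ) :=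
  LinearMap.mk₂ ℝ (fun v w x s => v x * w s)
    (fun _ _ _ => by funext x s; simp [add_mul])
    (fun _ _ _ => by funext x s; simp [mul_assoc])
    (fun _ _ _ => by funext x s; simp [mul_add])
    (fun _ _ _ => by funext x s; simp [mul_left_comm])

@[simp]
theorem outerMul_apply (v w : ℝ → ℝ) (x s : ℝ) : outerMul v w x s = v x * w s := rfl

theorem mom2_sub_outerMul {f : ℝ → ℝ → ℝ} {v g q₁ q₂ : ℝ → ℝ}
    (hf : ∀ x, IntervalIntegrable (fun s => f x s * q₂ s) MeasureTheory.volume 0 1)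
    (hg : IntervalIntegrable (fun s => g s * q₂ s) MeasureTheory.volume 0 1)
    (hgq : l2ip g q₂ = 0) :
    mom2 (f - outerMul v g) q₁ q₂ = mom2 f q₁ q₂ := by
  unfold mom2
  congr 1 with x
  calc ∫ s in (0:ℝ)..1, (f - outerMul v g) x s * q₁ x * q₂ s
      = ∫ s in (0:ℝ)..1, q₁ x * (f x s * q₂ s) - v x * q₁ x * (g s * q₂ s) := by
        congr 1 with s
        simp only [Pi.sub_apply, outerMul_apply]
        ring
    _ = ∫ s in (0:ℝ)..1, q₁ x * (f x s * q₂ s) := by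
        rw [intervalIntegral.integral_sub ((hf x).const_mul _) (hg.const_mul _),
          intervalIntegral.integral_const_mul (v x * q₁ x)]
        rw [show ∫ s in (0:ℝ)..1, g s * q₂ s = 0 from hgq, mul_zero, sub_zero]
    _ = ∫ s in (0:ℝ)..1, f x s * q₁ x * q₂ s := by
        congr 1 with s
        ring

section TensorSpan

variable {n : ℕ} {lam : Fin (n + 1) → ℝ → ℝ}

theorem outerMul_mem_tensorSpan {v w : ℝ → ℝ} (hv : v ∈ span ℝ (range lam))
    (hw : w ∈ span ℝ (range lam)) : outerMul v w ∈ tensorSpan lam := by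
  have : map₂ outerMul (span ℝ (range lam)) (span ℝ (range lam)) ≤ tensorSpan lam := by
    rw [map₂_span_span]
    refine span_mono ?_
    rintro _ ⟨_, ⟨i, rfl⟩, _, ⟨j, rfl⟩, rfl⟩
    exact ⟨i, j, rfl⟩
  exact this (apply_mem_map₂ outerMul hv hw)

theorem apply_mem_span_of_mem_tensorSpan {f : ℝ → ℝ → ℝ} (hf : f ∈ tensorSpan lam) (x : ℝ) :
    f x ∈ span ℝ (range lam) := by
  refine (span_le (p := (span ℝ (range lam)).comap
    (LinearMap.proj (R := ℝ) (φ := fun _ => ℝ → ℝ) x)) |>.mpr ?_) hf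
  rintro _ ⟨i, j, rfl⟩
  exact (span ℝ (range lam)).smul_mem (lam i x) (subset_span (mem_range_self j))

theorem flip_apply_mem_span_of_mem_tensorSpan {f : ℝ → ℝ → ℝ} (hf : f ∈ tensorSpan lam)
    (s : ℝ) : (fun x => f x s) ∈ span ℝ (range lam) := by
  refine (span_le (p := (span ℝ (range lam)).comap
    (LinearMap.pi fun x => LinearMap.proj (R := ℝ) (φ := fun _ : ℝ => ℝ) s ∘ₗ
      LinearMap.proj (φ := fun _ : ℝ => ℝ → ℝ) x)) |>.mpr ?_) hf
  rintro _ ⟨i, j, rfl⟩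
  have : (fun x => lam i x * lam j s) = lam j s • lam i := by funext x; simp [mul_comm]
  change (fun x => lam i x * lam j s) ∈ span ℝ (range lam)
  exact this ▸ (span ℝ (range lam)).smul_mem (lam j s) (subset_span (mem_range_self i))

end TensorSpan

def edgeJump : (ℝ → ℝ → ℝ) × (ℝ → ℝ → ℝ) →ₗ[ℝ] ℝ → ℝ where
  toFun φ x := φ.2 x 0 - φ.1 x 0
  map_add' _ _ := by funext x; simp only [Prod.fst_add, Prod.snd_add, Pi.add_apply]; ring
  map_smul' _ _ := by funext x; simp only [Prod.smul_fst, Prod.smul_snd, Pi.smul_apply]; simp; ring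

theorem edgeCont_iff_edgeJump {φ : (ℝ → ℝ → ℝ) × (ℝ → ℝ → ℝ)} :
    EdgeCont φ ↔ ∀ x ∈ Icc (0:ℝ) 1, edgeJump φ x = 0 := by
  refine forall₂_congr fun x _ => ?_
  rw [eq_comm, ← sub_eq_zero]
  rfl

section BrokenSpace

variable {nm np : ℕ} {lamm : Fin (nm + 1) → ℝ → ℝ} {lamp : Fin (np + 1) → ℝ → ℝ}

variable (lamm lamp) in
abbrev brokenSpace : Submodule ℝ ((ℝ → ℝ → ℝ) × (ℝ → ℝ → ℝ)) :=
  (tensorSpan lamm).prod (tensorSpan lamp)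

theorem edgeJump_mem_span (hnested : span ℝ (range lamm) ≤ span ℝ (range lamp))
    (φ : brokenSpace lamm lamp) : edgeJump φ ∈ span ℝ (range lamp) :=
  sub_mem (flip_apply_mem_span_of_mem_tensorSpan (Submodule.mem_prod.mp φ.2).2 0)
    (hnested (flip_apply_mem_span_of_mem_tensorSpan (Submodule.mem_prod.mp φ.2).1 0))

/-- Distinct elements of `𝕍₊` may agree on `[0, 1]`, so the jump itself need not vanish when `φ`
is edge-continuous; projecting along the functions that vanish on `[0, 1]` repairs this. -/
theorem exists_edgeJump_lift (hnested : span ℝ (range lamm) ≤ span ℝ (range lamp)) :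
    ∃ d : brokenSpace lamm lamp →ₗ[ℝ] span ℝ (range lamp),
      (∀ φ, ∀ x ∈ Icc (0:ℝ) 1, (d φ : ℝ → ℝ) x = edgeJump φ x) ∧
      ∀ φ : brokenSpace lamm lamp, EdgeCont φ.val → d φ = 0 := by
  let J := (edgeJump ∘ₗ (brokenSpace lamm lamp).subtype).codRestrict _ (edgeJump_mem_span hnested)
  have hJ (φ) : (J φ : ℝ → ℝ) = edgeJump φ := rfl
  obtain ⟨p, hker, hp⟩ := ((pi (Icc (0:ℝ) 1) fun _ => ⊥ : Submodule ℝ (ℝ → ℝ)).comap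
    (span ℝ (range lamp)).subtype).exists_le_ker_and_sub_mem
  refine ⟨p ∘ₗ J, fun φ x hx => ?_, fun φ hφ => hker ?_⟩
  · simpa [sub_eq_zero, hJ] using Submodule.mem_pi.mp (hp (J φ)) x hx
  · exact Submodule.mem_pi.mpr fun x hx => by simpa [hJ] using edgeCont_iff_edgeJump.mp hφ x hx

def edgeCorrection (d : brokenSpace lamm lamp →ₗ[ℝ] span ℝ (range lamp)) {g : ℝ → ℝ}
    (hg : g ∈ span ℝ (range lamp)) : brokenSpace lamm lamp →ₗ[ℝ] brokenSpace lamm lamp :=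
  LinearMap.codRestrict _
    (LinearMap.inr ℝ _ _ ∘ₗ outerMul.flip g ∘ₗ (span ℝ (range lamp)).subtype ∘ₗ d)
    fun φ => Submodule.mem_prod.mpr ⟨zero_mem _, outerMul_mem_tensorSpan (d φ).2 hg⟩

def conformingProj (d : brokenSpace lamm lamp →ₗ[ℝ] span ℝ (range lamp)) {g : ℝ → ℝ}
    (hg : g ∈ span ℝ (range lamp)) : brokenSpace lamm lamp →ₗ[ℝ] brokenSpace lamm lamp :=
  LinearMap.id - edgeCorrection d hg

variable {d : brokenSpace lamm lamp →ₗ[ℝ] span ℝ (range lamp)} {g : ℝ → ℝ}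
  {hg : g ∈ span ℝ (range lamp)}

theorem coe_edgeCorrection (φ : brokenSpace lamm lamp) :
    (edgeCorrection d hg φ).val = (0, outerMul (d φ) g) :=
  rfl

theorem coe_conformingProj (φ : brokenSpace lamm lamp) :
    (conformingProj d hg φ).val = (φ.val.1, φ.val.2 - outerMul (d φ) g) := by
  ext1 <;> simp [conformingProj, coe_edgeCorrection]

theorem edgeCont_conformingProj (hd : ∀ φ, ∀ x ∈ Icc (0:ℝ) 1, (d φ : ℝ → ℝ) x = edgeJump φ x)
    (hg0 : g 0 = 1) (φ : brokenSpace lamm lamp) : EdgeCont (conformingProj d hg φ).val := by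
  intro x hx
  simp [coe_conformingProj, hg0, hd φ x hx, edgeJump]

theorem conformingProj_apply_of_edgeCont
    (hd0 : ∀ φ : brokenSpace lamm lamp, EdgeCont φ.val → d φ = 0)
    {φ : brokenSpace lamm lamp} (hφ : EdgeCont φ.val) : conformingProj d hg φ = φ := by
  rw [conformingProj, LinearMap.sub_apply, LinearMap.id_apply, sub_eq_self]
  ext1
  simp [coe_edgeCorrection, hd0 φ hφ]

theorem mom2_conformingProj (hc : ∀ i, ContinuousOn (lamp i) (Icc 0 1)) {r : ℕ}
    (hgq : ∀ q ∈ polyDegLT r, l2ip g q = 0) (φ : brokenSpace lamm lamp) (q₁ : ℝ → ℝ)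
    {q₂ : ℝ → ℝ} (hq₂ : q₂ ∈ polyDegLT r) :
    mom2 (conformingProj d hg φ).val.1 q₁ q₂ = mom2 φ.val.1 q₁ q₂ ∧
      mom2 (conformingProj d hg φ).val.2 q₁ q₂ = mom2 φ.val.2 q₁ q₂ := by
  have hq : ContinuousOn q₂ (Icc 0 1) := (continuous_of_mem_polyDegLT hq₂).continuousOn
  refine ⟨by rw [coe_conformingProj], ?_⟩
  rw [coe_conformingProj]
  refine mom2_sub_outerMul (fun x => ?_) ?_ (hgq q₂ hq₂)
  · exact ((continuousOn_of_mem_span hc (apply_mem_span_of_mem_tensorSpan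
      (Submodule.mem_prod.mp φ.2).2 x)).mul hq).intervalIntegrable_of_Icc zero_le_one
  · exact ((continuousOn_of_mem_span hc hg).mul hq).intervalIntegrable_of_Icc zero_le_one

end BrokenSpace

theorem stmt4_general
    -- the two univariate spline spaces 𝕍₋ ⊆ 𝕍₊ with interpolatory bases
    (nm np : ℕ)
    (lamm : Fin (nm + 1) → ℝ → ℝ) (lamp : Fin (np + 1) → ℝ → ℝ)
    (hc_p : ∀ i, ContinuousOn (lamp i) (Set.Icc (0:ℝ) 1))
    (h0_p : ∀ i, lamp i 0 = if i = 0 then 1 else 0)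
    (hnested : Submodule.span ℝ (Set.range lamm) ≤ Submodule.span ℝ (Set.range lamp))
    -- the order r of moment preservation; Q ⊆ 𝕍₋
    (r : ℕ)
    -- (b) interior splines μ^σ_e matching the moments of the endpoint basis functions
    (hmu_p : ∀ e : Fin (np + 1), e = 0 ∨ e = Fin.last np →
      ∃ μ ∈ Submodule.span ℝ (Set.range lamp), μ 0 = 0 ∧ μ 1 = 0 ∧
        ∀ q ∈ polyDegLT r, l2ip μ q = l2ip (lamp e) q) :
    -- conclusion: the conforming projection P⁰ on the broken space V_pw
    ∃ P : ↥((tensorSpan lamm).prod (tensorSpan lamp)) →ₗ[ℝ]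
          ↥((tensorSpan lamm).prod (tensorSpan lamp)),
      (∀ φ, EdgeCont ((P φ : (ℝ → ℝ → ℝ) × (ℝ → ℝ → ℝ)))) ∧
      (∀ φ, P φ = φ ↔ EdgeCont ((φ : (ℝ → ℝ → ℝ) × (ℝ → ℝ → ℝ)))) ∧
      (P ∘ₗ P = P) ∧
      (∀ φ, ∀ q₁ ∈ polyDegLT r, ∀ q₂ ∈ polyDegLT r,
        mom2 ((P φ : (ℝ → ℝ → ℝ) × (ℝ → ℝ → ℝ)).1) q₁ q₂ =
          mom2 ((φ : (ℝ → ℝ → ℝ) × (ℝ → ℝ → ℝ)).1) q₁ q₂ ∧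
        mom2 ((P φ : (ℝ → ℝ → ℝ) × (ℝ → ℝ → ℝ)).2) q₁ q₂ =
          mom2 ((φ : (ℝ → ℝ → ℝ) × (ℝ → ℝ → ℝ)).2) q₁ q₂) := by
  obtain ⟨μ, hμ, hμ0, -, hμq⟩ := hmu_p 0 (Or.inl rfl)
  obtain ⟨g, hg, hg0, hgq⟩ := exists_mem_span_eq_one_and_l2ip_eq_zero hc_p
    (subset_span (mem_range_self 0)) hμ (by simp [h0_p]) hμ0 hμq
  obtain ⟨d, hd, hd0⟩ := exists_edgeJump_lift hnested
  have hP := edgeCont_conformingProj (hg := hg) hd hg0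
  exact ⟨conformingProj d hg, hP,
    fun φ => ⟨fun h => h ▸ hP φ, conformingProj_apply_of_edgeCont hd0⟩,
    LinearMap.ext fun φ => conformingProj_apply_of_edgeCont hd0 (hP φ),
    fun φ _ _ _ hq₂ => mom2_conformingProj hc_p hgq φ _ hq₂⟩

/-- Theorem 3.3 of the paper, two-patch edge setting: there exists a
moment-preserving `H¹`-conforming projection `P⁰` on the broken space `V_pw`: it maps into
the edge-continuous functions, fixes exactly the edge-continuous functions (hence is
idempotent with range the conforming subspace), and preserves the patchwise polynomial
moments of order `r`. -/
theorem stmt4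
    -- the two univariate spline spaces 𝕍₋ ⊆ 𝕍₊ with interpolatory bases
    (nm np : ℕ)
    (lamm : Fin (nm + 1) → ℝ → ℝ) (lamp : Fin (np + 1) → ℝ → ℝ)
    (hc_m : ∀ i, ContinuousOn (lamm i) (Set.Icc (0:ℝ) 1))
    (hc_p : ∀ i, ContinuousOn (lamp i) (Set.Icc (0:ℝ) 1))
    (hli_m : LinearIndependent ℝ lamm) (hli_p : LinearIndependent ℝ lamp)
    (h0_m : ∀ i, lamm i 0 = if i = 0 then 1 else 0)
    (h1_m : ∀ i, lamm i 1 = if i = Fin.last nm then 1 else 0)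
    (h0_p : ∀ i, lamp i 0 = if i = 0 then 1 else 0)
    (h1_p : ∀ i, lamp i 1 = if i = Fin.last np then 1 else 0)
    (hnested : Submodule.span ℝ (Set.range lamm) ≤ Submodule.span ℝ (Set.range lamp))
    -- the order r of moment preservation; Q ⊆ 𝕍₋
    (r : ℕ)
    (hQ : polyDegLT r ⊆ (Submodule.span ℝ (Set.range lamm) : Set (ℝ → ℝ)))
    -- (a) a moment-preserving restriction operator R : 𝕍₊ → 𝕍₋ preserving endpoint values
    (R : ↥(Submodule.span ℝ (Set.range lamp)) →ₗ[ℝ] ↥(Submodule.span ℝ (Set.range lamm)))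
    (hRid : ∀ v : ↥(Submodule.span ℝ (Set.range lamp)),
      (v : ℝ → ℝ) ∈ Submodule.span ℝ (Set.range lamm) → ((R v : ℝ → ℝ)) = (v : ℝ → ℝ))
    (hR0 : ∀ v, ((R v : ℝ → ℝ)) 0 = (v : ℝ → ℝ) 0)
    (hR1 : ∀ v, ((R v : ℝ → ℝ)) 1 = (v : ℝ → ℝ) 1)
    (hRmom : ∀ v, ∀ q ∈ polyDegLT r, l2ip (R v : ℝ → ℝ) q = l2ip (v : ℝ → ℝ) q)
    -- (b) interior splines μ^σ_e matching the moments of the endpoint basis functions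
    (hmu_m : ∀ e : Fin (nm + 1), e = 0 ∨ e = Fin.last nm →
      ∃ μ ∈ Submodule.span ℝ (Set.range lamm), μ 0 = 0 ∧ μ 1 = 0 ∧
        ∀ q ∈ polyDegLT r, l2ip μ q = l2ip (lamm e) q)
    (hmu_p : ∀ e : Fin (np + 1), e = 0 ∨ e = Fin.last np →
      ∃ μ ∈ Submodule.span ℝ (Set.range lamp), μ 0 = 0 ∧ μ 1 = 0 ∧
        ∀ q ∈ polyDegLT r, l2ip μ q = l2ip (lamp e) q) :
    -- conclusion: the conforming projection P⁰ on the broken space V_pw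
    ∃ P : ↥((tensorSpan lamm).prod (tensorSpan lamp)) →ₗ[ℝ]
          ↥((tensorSpan lamm).prod (tensorSpan lamp)),
      (∀ φ, EdgeCont ((P φ : (ℝ → ℝ → ℝ) × (ℝ → ℝ → ℝ)))) ∧
      (∀ φ, P φ = φ ↔ EdgeCont ((φ : (ℝ → ℝ → ℝ) × (ℝ → ℝ → ℝ)))) ∧
      (P ∘ₗ P = P) ∧
      (∀ φ, ∀ q₁ ∈ polyDegLT r, ∀ q₂ ∈ polyDegLT r,
        mom2 ((P φ : (ℝ → ℝ → ℝ) × (ℝ → ℝ → ℝ)).1) q₁ q₂ =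
          mom2 ((φ : (ℝ → ℝ → ℝ) × (ℝ → ℝ → ℝ)).1) q₁ q₂ ∧
        mom2 ((P φ : (ℝ → ℝ → ℝ) × (ℝ → ℝ → ℝ)).2) q₁ q₂ =
          mom2 ((φ : (ℝ → ℝ → ℝ) × (ℝ → ℝ → ℝ)).2) q₁ q₂) :=
  stmt4_general nm np lamm lamp hc_p h0_p hnested r hmu_p

end
end

section
/- Equip C([0,1],ℝ) with the L² inner product ⟨f,g⟩ = ∫₀¹ f g. Let 𝕍₋ ⊆ 𝕍₊ be finite-dimensional subspaces of C([0,1],ℝ) and Q ⊆ 𝕍₋ a subspace. Assume there exist λ₀, λₙ ∈ 𝕍₋ with λ₀(0) = 1, λ₀(1) = 0, λₙ(0) = 0, λₙ(1) = 1, and elements μ₀, μₙ ∈ 𝕍₋ with μ₀(0) = μ₀(1) = μₙ(0) = μₙ(1) = 0, ⟨μ₀, q⟩ = ⟨λ₀, q⟩ and ⟨μₙ, q⟩ = ⟨λₙ, q⟩ for all q ∈ Q. Then there exists a linear map R : 𝕍₊ → 𝕍₋ such that: (i) R v = v for all v ∈ 𝕍₋ (so R is a projection onto 𝕍₋ and a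 left inverse of the inclusion 𝕍₋ ↪ 𝕍₊); (ii) (Rφ)(0) = φ(0) and (Rφ)(1) = φ(1) for all φ ∈ 𝕍₊; and (iii) ⟨Rφ, q⟩ = ⟨φ, q⟩ for all φ ∈ 𝕍₊ and q ∈ Q. -/
noncomputable section

open MeasureTheory Set LinearMap

lemma l2ip_comm (f g : ℝ → ℝ) : l2ip f g = l2ip g f := by
  unfold l2ip; simp_rw [mul_comm]

lemma l2ip_add_left {f g h : ℝ → ℝ}
    (hf : IntervalIntegrable (fun x => f x * h x) volume 0 1)
    (hg : IntervalIntegrable (fun x => g x * h x) volume 0 1) :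
    l2ip (f + g) h = l2ip f h + l2ip g h := by
  unfold l2ip
  rw [← intervalIntegral.integral_add hf hg]
  congr 1; funext x; simp [add_mul]

lemma l2ip_sub_left_s8 {f g h : ℝ → ℝ}
    (hf : IntervalIntegrable (fun x => f x * h x) volume 0 1)
    (hg : IntervalIntegrable (fun x => g x * h x) volume 0 1) :
    l2ip (f - g) h = l2ip f h - l2ip g h := by
  unfold l2ip
  rw [← intervalIntegral.integral_sub hf hg]
  congr 1; funext x; simp [sub_mul]

lemma l2ip_smul_left (c : ℝ) (f g : ℝ → ℝ) : l2ip (c • f) g = c * l2ip f g := by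
  unfold l2ip
  rw [← intervalIntegral.integral_const_mul]
  congr 1; funext x; simp [mul_assoc]

lemma l2ip_zero_right {g : ℝ → ℝ} (hg : Set.EqOn g 0 (Set.Icc 0 1)) (f : ℝ → ℝ) :
    l2ip f g = 0 := by
  unfold l2ip
  rw [intervalIntegral.integral_congr (g := fun _ => (0:ℝ))]
  · simp
  · intro x hx
    rw [Set.uIcc_of_le (by norm_num : (0:ℝ) ≤ 1)] at hx
    simp [hg hx]

lemma l2ip_zero_left {f : ℝ → ℝ} (hf : Set.EqOn f 0 (Set.Icc 0 1)) (g : ℝ → ℝ) :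
    l2ip f g = 0 := by rw [l2ip_comm]; exact l2ip_zero_right hf g

lemma l2ip_self_eqOn_zero {q : ℝ → ℝ} (hq : ContinuousOn q (Set.Icc 0 1))
    (h : l2ip q q = 0) : Set.EqOn q 0 (Set.Icc 0 1) := by
  have hi : IntervalIntegrable (fun x => q x * q x) volume 0 1 := by
    apply ContinuousOn.intervalIntegrable
    rw [Set.uIcc_of_le (by norm_num : (0:ℝ) ≤ 1)]
    exact hq.mul hq
  unfold l2ip at h
  have hae := (intervalIntegral.integral_eq_zero_iff_of_le_of_nonneg_ae
    (by norm_num : (0:ℝ) ≤ 1)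
    (Filter.Eventually.of_forall fun x => mul_self_nonneg (q x)) hi).mp h
  rw [MeasureTheory.restrict_Ioc_eq_restrict_Icc] at hae
  have heq : Set.EqOn (fun x => q x * q x) (0 : ℝ → ℝ) (Set.Icc (0:ℝ) 1) :=
    Measure.eqOn_Icc_of_ae_eq volume (by norm_num : (0:ℝ) ≠ 1) hae (hq.mul hq)
      continuousOn_const
  intro x hx
  have := heq hx
  simpa [mul_self_eq_zero] using this

/-- construction of the moment-preserving restriction operator ℛ of
Section 3.2 of the paper: given nested finite-dimensional subspaces `𝕍₋ ⊆ 𝕍₊` of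
`C([0,1],ℝ)`, a subspace `Q ⊆ 𝕍₋`, endpoint-interpolatory elements `λ₀, λₙ ∈ 𝕍₋`, and
interior elements `μ₀, μₙ ∈ 𝕍₋` vanishing at both endpoints with the same `Q`-moments as
`λ₀, λₙ`, there exists a linear map `R : 𝕍₊ → 𝕍₋` which is a projection onto `𝕍₋`,
preserves both endpoint values, and preserves all moments against `Q`. -/
theorem stmt8
    (Vm Vp : Submodule ℝ (ℝ → ℝ)) (hnested : Vm ≤ Vp)
    [FiniteDimensional ℝ Vp]
    (hcont : ∀ f ∈ Vp, ContinuousOn f (Set.Icc (0:ℝ) 1))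
    (Q : Submodule ℝ (ℝ → ℝ)) (hQ : Q ≤ Vm)
    (lam0 lamn : ℝ → ℝ) (hlam0 : lam0 ∈ Vm) (hlamn : lamn ∈ Vm)
    (hlam00 : lam0 0 = 1) (hlam01 : lam0 1 = 0)
    (hlamn0 : lamn 0 = 0) (hlamn1 : lamn 1 = 1)
    (mu0 mun : ℝ → ℝ) (hmu0 : mu0 ∈ Vm) (hmun : mun ∈ Vm)
    (hmu00 : mu0 0 = 0) (hmu01 : mu0 1 = 0)
    (hmun0 : mun 0 = 0) (hmun1 : mun 1 = 0)
    (hmu0m : ∀ q ∈ Q, l2ip mu0 q = l2ip lam0 q)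
    (hmunm : ∀ q ∈ Q, l2ip mun q = l2ip lamn q) :
    ∃ R : ↥Vp →ₗ[ℝ] ↥Vm,
      -- (i) R is a projection onto 𝕍₋ (a left inverse of the inclusion 𝕍₋ ↪ 𝕍₊)
      (∀ v : ↥Vp, (v : ℝ → ℝ) ∈ Vm → ((R v : ℝ → ℝ)) = (v : ℝ → ℝ)) ∧
      -- (ii) R preserves the endpoint values
      (∀ v : ↥Vp, ((R v : ℝ → ℝ)) 0 = (v : ℝ → ℝ) 0 ∧ ((R v : ℝ → ℝ)) 1 = (v : ℝ → ℝ) 1) ∧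
      -- (iii) R preserves all moments against Q
      (∀ v : ↥Vp, ∀ q ∈ Q, l2ip (R v : ℝ → ℝ) q = l2ip (v : ℝ → ℝ) q) := by
  classical
  have hQp : Q ≤ Vp := hQ.trans hnested
  haveI : FiniteDimensional ℝ Vm := Submodule.finiteDimensional_of_le hnested
  haveI : FiniteDimensional ℝ Q := Submodule.finiteDimensional_of_le hQp
  have hInt : ∀ f ∈ Vp, ∀ g ∈ Vp,
      IntervalIntegrable (fun x => f x * g x) volume 0 1 := by
    intro f hf g hg
    apply ContinuousOn.intervalIntegrable
    rw [Set.uIcc_of_le (by norm_num : (0:ℝ) ≤ 1)]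
    exact (hcont f hf).mul (hcont g hg)
  -- the bilinear pairing on Vp
  let Bl : ↥Vp →ₗ[ℝ] ↥Vp →ₗ[ℝ] ℝ := LinearMap.mk₂ ℝ (fun v w => l2ip v w)
    (fun v v' w => by
      show l2ip ((v : ℝ → ℝ) + (v' : ℝ → ℝ)) w = l2ip v w + l2ip v' w
      rw [l2ip_add_left (hInt _ v.2 _ w.2) (hInt _ v'.2 _ w.2)])
    (fun c v w => by
      show l2ip (c • (v : ℝ → ℝ)) w = c • l2ip v w
      rw [l2ip_smul_left]; rfl)
    (fun v w w' => by
      show l2ip (v : ℝ → ℝ) ((w : ℝ → ℝ) + (w' : ℝ → ℝ)) = l2ip v w + l2ip v w'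
      rw [l2ip_comm, l2ip_add_left (hInt _ w.2 _ v.2) (hInt _ w'.2 _ v.2),
        l2ip_comm (w : ℝ → ℝ), l2ip_comm (w' : ℝ → ℝ)])
    (fun c v w => by
      show l2ip (v : ℝ → ℝ) (c • (w : ℝ → ℝ)) = c • l2ip v w
      rw [l2ip_comm, l2ip_smul_left, l2ip_comm]; rfl)
  let incQ : ↥Q →ₗ[ℝ] ↥Vp := Submodule.inclusion hQp
  let incm : ↥Vm →ₗ[ℝ] ↥Vp := Submodule.inclusion hnested
  let φ : ↥Vp →ₗ[ℝ] Module.Dual ℝ ↥Q := Bl.compl₂ incQ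
  let T : ↥Q →ₗ[ℝ] Module.Dual ℝ ↥Q := φ.comp incQ
  have hφ_apply : ∀ (v : ↥Vp) (q : ↥Q), φ v q = l2ip v q := fun v q => rfl
  -- elements of ker T vanish on [0,1]
  have hker : ∀ q : ↥Q, q ∈ LinearMap.ker T → Set.EqOn (q : ℝ → ℝ) 0 (Set.Icc 0 1) := by
    intro q hq
    have h0 : T q q = 0 := by rw [LinearMap.mem_ker.mp hq]; rfl
    have h0' : l2ip (q : ℝ → ℝ) (q : ℝ → ℝ) = 0 := h0
    exact l2ip_self_eqOn_zero (hcont _ (hQp q.2)) h0'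
  -- range T equals the annihilator of ker T
  have hrange : LinearMap.range T = (LinearMap.ker T).dualAnnihilator := by
    apply Submodule.eq_of_le_of_finrank_eq
    · rintro _ ⟨q0, rfl⟩
      rw [Submodule.mem_dualAnnihilator]
      intro q hq
      show l2ip (q0 : ℝ → ℝ) (q : ℝ → ℝ) = 0
      exact l2ip_zero_right (hker q hq) _
    · have h1 := LinearMap.finrank_range_add_finrank_ker T
      have h2 := Submodule.finrank_quotient_add_finrank (LinearMap.ker T)
      have h3 : Module.finrank ℝ (↥Q ⧸ LinearMap.ker T)
          = Module.finrank ℝ (LinearMap.ker T).dualAnnihilator :=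
        (Subspace.quotEquivAnnihilator (LinearMap.ker T)).finrank_eq
      omega
  have hφmem : ∀ v : ↥Vp, φ v ∈ LinearMap.range T := by
    intro v
    rw [hrange, Submodule.mem_dualAnnihilator]
    intro q hq
    show l2ip (v : ℝ → ℝ) (q : ℝ → ℝ) = 0
    exact l2ip_zero_right (hker q hq) _
  let f : ↥Vm →ₗ[ℝ] Module.Dual ℝ ↥Q := φ.comp incm
  have hranfT : LinearMap.range T ≤ LinearMap.range f := by
    rintro _ ⟨q, rfl⟩
    refine ⟨Submodule.inclusion hQ q, ?_⟩
    show φ (incm (Submodule.inclusion hQ q)) = φ (incQ q)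
    congr 1
  have hφf : ∀ v : ↥Vp, φ v ∈ LinearMap.range f := fun v => hranfT (hφmem v)
  let h : ↥Vp →ₗ[ℝ] ↥(LinearMap.range f) := φ.codRestrict (LinearMap.range f) hφf
  haveI := Module.Free.of_divisionRing (K := ℝ) (V := ↥(LinearMap.range f))
  haveI : Module.Projective ℝ ↥(LinearMap.range f) := Module.Projective.of_free
  obtain ⟨g, hg⟩ := f.rangeRestrict.exists_rightInverse_of_surjective
    (LinearMap.range_rangeRestrict f)
  let S₀ : ↥Vp →ₗ[ℝ] ↥Vm := g.comp h
  have hS₀ : ∀ v : ↥Vp, φ (incm (S₀ v)) = φ v := by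
    intro v
    have h1 : f (S₀ v) = φ v := by
      have h2 : f.rangeRestrict (g (h v)) = h v := by
        rw [← LinearMap.comp_apply, hg]; rfl
      have h3 : (f.rangeRestrict (g (h v)) : Module.Dual ℝ ↥Q) = f (g (h v)) := rfl
      show f (g (h v)) = φ v
      rw [← h3, h2]; rfl
    exact h1
  -- projection onto Vm
  let Vm' : Submodule ℝ ↥Vp := Vm.comap Vp.subtype
  obtain ⟨C, hC⟩ := Submodule.exists_isCompl Vm'
  let pr : ↥Vp →ₗ[ℝ] ↥Vm' := Vm'.linearProjOfIsCompl C hC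
  let e : ↥Vm' ≃ₗ[ℝ] ↥Vm := Submodule.comapSubtypeEquivOfLe hnested
  let P : ↥Vp →ₗ[ℝ] ↥Vm := e.toLinearMap.comp pr
  have hP : ∀ (v : ↥Vp), (v : ℝ → ℝ) ∈ Vm → ((P v : ℝ → ℝ)) = (v : ℝ → ℝ) := by
    intro v hv
    have hv' : v ∈ Vm' := hv
    have h1 : pr v = ⟨v, hv'⟩ := Submodule.linearProjOfIsCompl_apply_left hC ⟨v, hv'⟩
    show ((e (pr v) : ↥Vm) : ℝ → ℝ) = (v : ℝ → ℝ)
    rw [h1]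
    rfl
  let S : ↥Vp →ₗ[ℝ] ↥Vm := P + S₀.comp (LinearMap.id - incm.comp P)
  have hScoe : ∀ v : ↥Vp, S v = P v + S₀ (v - incm (P v)) := fun v => rfl
  have hSm : ∀ (v : ↥Vp), (v : ℝ → ℝ) ∈ Vm → ((S v : ℝ → ℝ)) = (v : ℝ → ℝ) := by
    intro v hv
    have h1 : incm (P v) = v := by
      apply Subtype.ext
      show ((P v : ↥Vm) : ℝ → ℝ) = (v : ℝ → ℝ)
      exact hP v hv
    rw [hScoe, h1, sub_self, map_zero, add_zero]
    exact hP v hv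
  have hSφ : ∀ v : ↥Vp, φ (incm (S v)) = φ v := by
    intro v
    rw [hScoe, map_add, map_add, hS₀, map_sub]
    abel
  have hSq : ∀ (v : ↥Vp) (q : ℝ → ℝ) (hq : q ∈ Q),
      l2ip ((S v : ℝ → ℝ)) q = l2ip (v : ℝ → ℝ) q := by
    intro v q hq
    have := congrFun (congrArg DFunLike.coe (hSφ v)) ⟨q, hq⟩
    exact this
  -- endpoint evaluations
  let ev0 : ↥Vp →ₗ[ℝ] ℝ := (LinearMap.proj (0:ℝ)).comp Vp.subtype
  let ev1 : ↥Vp →ₗ[ℝ] ℝ := (LinearMap.proj (1:ℝ)).comp Vp.subtype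
  let evm0 : ↥Vm →ₗ[ℝ] ℝ := (LinearMap.proj (0:ℝ)).comp Vm.subtype
  let evm1 : ↥Vm →ₗ[ℝ] ℝ := (LinearMap.proj (1:ℝ)).comp Vm.subtype
  let L0 : ↥Vp →ₗ[ℝ] ℝ := ev0 - evm0.comp S
  let L1 : ↥Vp →ₗ[ℝ] ℝ := ev1 - evm1.comp S
  let G0 : ↥Vm := ⟨lam0 - mu0, sub_mem hlam0 hmu0⟩
  let G1 : ↥Vm := ⟨lamn - mun, sub_mem hlamn hmun⟩
  let R : ↥Vp →ₗ[ℝ] ↥Vm := S + L0.smulRight G0 + L1.smulRight G1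
  have hRcoe : ∀ v : ↥Vp, ((R v : ℝ → ℝ)) =
      ((S v : ℝ → ℝ)) + L0 v • (lam0 - mu0) + L1 v • (lamn - mun) := fun v => rfl
  have hL0 : ∀ v : ↥Vp, L0 v = (v : ℝ → ℝ) 0 - ((S v : ℝ → ℝ)) 0 := fun v => rfl
  have hL1 : ∀ v : ↥Vp, L1 v = (v : ℝ → ℝ) 1 - ((S v : ℝ → ℝ)) 1 := fun v => rfl
  refine ⟨R, ?_, ?_, ?_⟩
  · intro v hv
    rw [hRcoe, hL0, hL1, hSm v hv, sub_self, sub_self, zero_smul, zero_smul,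
      add_zero, add_zero]
  · intro v
    constructor
    · rw [hRcoe]
      simp only [Pi.add_apply, Pi.smul_apply, Pi.sub_apply, smul_eq_mul,
        hL0, hL1, hlam00, hmu00, hlamn0, hmun0]
      ring
    · rw [hRcoe]
      simp only [Pi.add_apply, Pi.smul_apply, Pi.sub_apply, smul_eq_mul,
        hL0, hL1, hlam01, hmu01, hlamn1, hmun1]
      ring
  · intro v q hq
    have hqp : q ∈ Vp := hQp hq
    have hSvm : ((S v : ℝ → ℝ)) ∈ Vp := hnested (S v).2
    have hG0 : (lam0 - mu0) ∈ Vp := hnested (sub_mem hlam0 hmu0)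
    have hG1 : (lamn - mun) ∈ Vp := hnested (sub_mem hlamn hmun)
    rw [hRcoe]
    rw [l2ip_add_left (f := (S v : ℝ → ℝ) + L0 v • (lam0 - mu0))
      (hInt _ (add_mem hSvm (Submodule.smul_mem _ _ hG0)) _ hqp)
      (hInt _ (Submodule.smul_mem _ _ hG1) _ hqp),
      l2ip_add_left (hInt _ hSvm _ hqp) (hInt _ (Submodule.smul_mem _ _ hG0) _ hqp),
      l2ip_smul_left, l2ip_smul_left,
      l2ip_sub_left_s8 (hInt _ (hnested hlam0) _ hqp) (hInt _ (hnested hmu0) _ hqp),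
      l2ip_sub_left_s8 (hInt _ (hnested hlamn) _ hqp) (hInt _ (hnested hmun) _ hqp),
      hmu0m q hq, hmunm q hq, hSq v q hq]
    ring

end
end
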